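/- arXiv:2605.09386 — 2 statements merged into one kernel-verified Lean document; each statement's English description precedes it below -/
import Mathlib

section
/- (Converse of the constant-speed characterization) Let X be a finite type, p : ℝ → X → ℝ a categorical probability path on [0, κmax] with p κ x > 0 and continuously differentiable in κ, and κ : [0,1] → [0, κmax] a continuously differentiable monotone nondecreasing scheduler with κ(0) = 0, κ(1) = κmax. If the Fisher–Rao energy attains the lower bound, E[κ] = ∫₀¹ Σ_x (d/dt p(κ t) x)² / p(κ t) x dt = L² where L = ∫₀^{κmax} √(I(ξ)) dξ, then the Fisher–Rao speed is constant: √(Σ_{x ∈ X} (d/dt p(κ t) x)² / p(κ t) x) = L for every t ∈ [0,1]. -/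
/-!
Reparametrising the path by the scheduler multiplies its Fisher–Rao speed by `κ'(t) ≥ 0`, so the
speed is `v(t) = κ'(t) √I(κ t)`. By the change of variables `ξ = κ t`, `∫₀¹ v = L`, while the
energy hypothesis says `∫₀¹ v² = L²`. Hence `∫₀¹ (v - L)² = L² - 2L·L + L² = 0`, and the
continuous function `v` is identically `L`.
-/

open Set MeasureTheory

theorem eqOn_const_of_integral_eq_of_integral_sq_eq {f : ℝ → ℝ} {a b c : ℝ} (hab : a < b)
    (hf : ContinuousOn f (Icc a b)) (h₁ : ∫ x in a..b, f x = (b - a) * c)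
    (h₂ : ∫ x in a..b, f x ^ 2 = (b - a) * c ^ 2) :
    EqOn f (fun _ => c) (Icc a b) := by
  have hfi : IntervalIntegrable f volume a b := hf.intervalIntegrable_of_Icc hab.le
  have hf2i : IntervalIntegrable (fun x => f x ^ 2) volume a b :=
    (hf.pow 2).intervalIntegrable_of_Icc hab.le
  have hvar : ∫ x in a..b, (f x - c) ^ 2 = 0 := by
    have hexpand : ∀ x, (f x - c) ^ 2 = (f x ^ 2 - 2 * c * f x) + c ^ 2 := fun x => by ring
    simp only [hexpand]
    rw [intervalIntegral.integral_add (hf2i.sub (hfi.const_mul _)) intervalIntegrable_const,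
      intervalIntegral.integral_sub hf2i (hfi.const_mul _), intervalIntegral.integral_const_mul,
      intervalIntegral.integral_const, h₁, h₂, smul_eq_mul]
    ring
  intro x hx
  by_contra hne
  have hlt : 0 < ∫ y in a..b, (f y - c) ^ 2 := by
    simpa using intervalIntegral.integral_lt_integral_of_continuousOn_of_le_of_exists_lt hab
      continuousOn_const ((hf.sub continuousOn_const).pow 2) (fun y _ => sq_nonneg (f y - c))
      ⟨x, hx, sq_pos_of_ne_zero (sub_ne_zero.mpr hne)⟩
  exact hlt.ne' hvar

theorem integral_comp_mul_derivWithin_Icc {f g : ℝ → ℝ} {a b : ℝ} (hab : a < b)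
    (hf : ContDiffOn ℝ 1 f (Icc a b)) (hg : ContinuousOn g (f '' Icc a b)) :
    ∫ x in a..b, g (f x) * derivWithin f (Icc a b) x = ∫ u in f a..f b, g u := by
  have hIcc : uIcc a b = Icc a b := uIcc_of_le hab.le
  refine intervalIntegral.integral_comp_mul_deriv'' (hIcc ▸ hf.continuousOn) (fun x hx => ?_)
    (hIcc ▸ hf.continuousOn_derivWithin (uniqueDiffOn_Icc hab) le_rfl) (hIcc ▸ hg)
  rw [min_eq_left hab.le, max_eq_right hab.le] at hx
  exact ((hf.differentiableOn one_ne_zero x (Ioo_subset_Icc_self hx)).hasDerivWithinAt.hasDerivAt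
    (Icc_mem_nhds hx.1 hx.2)).hasDerivWithinAt

section FisherInformation

variable {X : Type*} [Fintype X]

/-- For the reparametrised path `fun t => p (κ t)` this is the squared Fisher–Rao speed. -/
noncomputable def fisherInformation (p : ℝ → X → ℝ) (s : Set ℝ) (ξ : ℝ) : ℝ :=
  ∑ x, (derivWithin (fun η => p η x) s ξ) ^ 2 / p ξ x

theorem fisherInformation_nonneg {p : ℝ → X → ℝ} {s : Set ℝ} {ξ : ℝ} (hp : ∀ x, 0 ≤ p ξ x) :
    0 ≤ fisherInformation p s ξ :=
  Finset.sum_nonneg fun x _ => div_nonneg (sq_nonneg _) (hp x)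

theorem continuousOn_fisherInformation {p : ℝ → X → ℝ} {s : Set ℝ} (hs : UniqueDiffOn ℝ s)
    (hp : ∀ ξ ∈ s, ∀ x, p ξ x ≠ 0) (hdiff : ∀ x, ContDiffOn ℝ 1 (fun ξ => p ξ x) s) :
    ContinuousOn (fisherInformation p s) s :=
  continuousOn_finsetSum _ fun x _ =>
    (((hdiff x).continuousOn_derivWithin hs le_rfl).pow 2).div (hdiff x).continuousOn
      fun ξ hξ => hp ξ hξ x

theorem fisherInformation_comp {p : ℝ → X → ℝ} {κ : ℝ → ℝ} {s S : Set ℝ} {t κ' : ℝ}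
    (hκ : HasDerivWithinAt κ κ' s t) (hmaps : MapsTo κ s S)
    (hp : ∀ x, DifferentiableWithinAt ℝ (fun ξ => p ξ x) S (κ t))
    (hs : UniqueDiffWithinAt ℝ s t) :
    fisherInformation (fun τ => p (κ τ)) s t = κ' ^ 2 * fisherInformation p S (κ t) := by
  rw [fisherInformation, fisherInformation, Finset.mul_sum]
  refine Finset.sum_congr rfl fun x _ => ?_
  have hchain : HasDerivWithinAt (fun τ => p (κ τ) x)
      (derivWithin (fun ξ => p ξ x) S (κ t) * κ') s t :=
    (hp x).hasDerivWithinAt.comp t hκ hmaps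
  rw [hchain.derivWithin hs]
  ring

end FisherInformation

theorem fisher_rao_constant_speed_of_min_energy_general {X : Type*} [Fintype X] (κmax : ℝ)
    (p : ℝ → X → ℝ)
    (hpos : ∀ κ ∈ Set.Icc (0 : ℝ) κmax, ∀ x, 0 < p κ x)
    (hdiff : ∀ x, ContDiffOn ℝ 1 (fun ξ => p ξ x) (Set.Icc 0 κmax))
    (κ : ℝ → ℝ)
    (hκdiff : ContDiffOn ℝ 1 κ (Set.Icc 0 1))
    (hκmono : MonotoneOn κ (Set.Icc 0 1))
    (hκmap : ∀ t ∈ Set.Icc (0 : ℝ) 1, κ t ∈ Set.Icc (0 : ℝ) κmax)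
    (hκ0 : κ 0 = 0) (hκ1 : κ 1 = κmax)
    (L : ℝ)
    (hL : L = ∫ ξ in (0:ℝ)..κmax,
        Real.sqrt (∑ x, (derivWithin (fun η => p η x) (Set.Icc 0 κmax) ξ) ^ 2 / p ξ x))
    (hE : ∫ t in (0:ℝ)..1,
        ∑ x, (derivWithin (fun s => p (κ s) x) (Set.Icc 0 1) t) ^ 2 / p (κ t) x = L ^ 2) :
    ∀ t ∈ Set.Icc (0 : ℝ) 1,
      Real.sqrt (∑ x, (derivWithin (fun s => p (κ s) x) (Set.Icc 0 1) t) ^ 2 / p (κ t) x)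
        = L := by
  set I := fisherInformation p (Icc 0 κmax)
  set v : ℝ → ℝ := fun t => √(I (κ t)) * derivWithin κ (Icc 0 1) t
  have hspeed : ∀ t ∈ Icc (0 : ℝ) 1,
      √(fisherInformation (fun s => p (κ s)) (Icc 0 1) t) = v t := fun t ht => by
    rw [fisherInformation_comp ((hκdiff.differentiableOn one_ne_zero t ht).hasDerivWithinAt)
      hκmap (fun x => (hdiff x).differentiableOn one_ne_zero _ (hκmap t ht))
      (uniqueDiffOn_Icc zero_lt_one t ht), Real.sqrt_mul (sq_nonneg _),
      Real.sqrt_sq hκmono.derivWithin_nonneg, mul_comm]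
  have hI_cont : ContinuousOn (fun ξ => √(I ξ)) (Icc 0 κmax) := by
    rcases (hκ0 ▸ (hκmap 0 ⟨le_rfl, zero_le_one⟩).2 : 0 ≤ κmax).eq_or_lt with rfl | hκmax
    · rw [Icc_self]
      exact continuousOn_singleton _ _
    · exact (continuousOn_fisherInformation (uniqueDiffOn_Icc hκmax)
        (fun ξ hξ x => (hpos ξ hξ x).ne') hdiff).sqrt
  have hv_cont : ContinuousOn v (Icc 0 1) :=
    (hI_cont.comp hκdiff.continuousOn hκmap).mul
      (hκdiff.continuousOn_derivWithin (uniqueDiffOn_Icc zero_lt_one) le_rfl)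
  have hv_int : ∫ t in (0 : ℝ)..1, v t = (1 - 0) * L := by
    have hsubst := integral_comp_mul_derivWithin_Icc zero_lt_one hκdiff
      (hI_cont.mono (mapsTo_iff_image_subset.mp hκmap))
    rw [hκ0, hκ1] at hsubst
    rw [sub_zero, one_mul, hL]
    exact hsubst
  have hv_sq : ∫ t in (0 : ℝ)..1, v t ^ 2 = (1 - 0) * L ^ 2 := by
    rw [sub_zero, one_mul, ← hE]
    refine intervalIntegral.integral_congr fun t ht => ?_
    rw [uIcc_of_le zero_le_one] at ht
    rw [← hspeed t ht]
    exact Real.sq_sqrt (fisherInformation_nonneg fun x => (hpos _ (hκmap t ht) x).le)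
  intro t ht
  exact (hspeed t ht).trans (eqOn_const_of_integral_eq_of_integral_sq_eq zero_lt_one hv_cont
    hv_int hv_sq ht)

/-- Converse of the constant-speed characterization: if the Fisher–Rao
energy attains the lower bound `L²`, then the Fisher–Rao speed is constantly `L`. -/
theorem fisher_rao_constant_speed_of_min_energy {X : Type*} [Fintype X] (κmax : ℝ)
    (p : ℝ → X → ℝ)
    (hpos : ∀ κ ∈ Set.Icc (0 : ℝ) κmax, ∀ x, 0 < p κ x)
    (hsum : ∀ κ ∈ Set.Icc (0 : ℝ) κmax, ∑ x, p κ x = 1)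
    (hdiff : ∀ x, ContDiffOn ℝ 1 (fun ξ => p ξ x) (Set.Icc 0 κmax))
    (κ : ℝ → ℝ)
    (hκdiff : ContDiffOn ℝ 1 κ (Set.Icc 0 1))
    (hκmono : MonotoneOn κ (Set.Icc 0 1))
    (hκmap : ∀ t ∈ Set.Icc (0 : ℝ) 1, κ t ∈ Set.Icc (0 : ℝ) κmax)
    (hκ0 : κ 0 = 0) (hκ1 : κ 1 = κmax)
    (L : ℝ)
    (hL : L = ∫ ξ in (0:ℝ)..κmax,
        Real.sqrt (∑ x, (derivWithin (fun η => p η x) (Set.Icc 0 κmax) ξ) ^ 2 / p ξ x))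
    (hE : ∫ t in (0:ℝ)..1,
        ∑ x, (derivWithin (fun s => p (κ s) x) (Set.Icc 0 1) t) ^ 2 / p (κ t) x = L ^ 2) :
    ∀ t ∈ Set.Icc (0 : ℝ) 1,
      Real.sqrt (∑ x, (derivWithin (fun s => p (κ s) x) (Set.Icc 0 1) t) ^ 2 / p (κ t) x)
        = L :=
  fisher_rao_constant_speed_of_min_energy_general κmax p hpos hdiff κ hκdiff hκmono hκmap hκ0 hκ1 L
    hL hE
end

section
/- (Closed-form kinetic-optimal scheduler for the mask mixture path) Define κ* : [0,1] → [0,1] by κ*(t) = sin²(π t / 2). Then κ*(0) = 0, κ*(1) = 1, κ* is monotone nondecreasing and differentiable, and for all t ∈ (0,1) it has constant normalized Fisher–Rao speed: (κ*)'(t) / √( κ*(t) · (1 − κ*(t)) ) = π. Consequently its Fisher–Rao energy for the mask mixture path equals π²: ∫₀¹ ((κ*)'(t))² / ( κ*(t) (1 − κ*(t)) ) dt = π². -/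
/-!
Substituting `κ = sin² θ` turns the Fisher–Rao line element `dκ² / (κ (1 - κ))` into the
Euclidean one `4 dθ²`, since `κ (1 - κ) = (sin θ cos θ)²` and `dκ = 2 sin θ cos θ dθ`.
For `θ(t) = π t / 2` the speed is therefore the constant `2 θ' = π` and the energy is `π²`.
-/

open Real Set

lemma sin_sq_mul_one_sub_sin_sq (x : ℝ) :
    sin x ^ 2 * (1 - sin x ^ 2) = (sin x * cos x) ^ 2 := by
  rw [← cos_sq', mul_pow]

lemma sin_mul_cos_pos_of_mem_Ioo {x : ℝ} (hx : x ∈ Ioo 0 (π / 2)) : 0 < sin x * cos x :=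
  mul_pos (sin_pos_of_pos_of_lt_pi hx.1 (by linarith [hx.2, pi_pos]))
    (cos_pos_of_mem_Ioo ⟨by linarith [hx.1, pi_pos], hx.2⟩)

lemma HasDerivAt.sin_sq {f : ℝ → ℝ} {f' x : ℝ} (hf : HasDerivAt f f' x) :
    HasDerivAt (fun t => Real.sin (f t) ^ 2) (2 * Real.sin (f x) * Real.cos (f x) * f') x :=
  (hf.sin.fun_pow 2).congr_deriv (by ring)

lemma monotoneOn_sin_sq : MonotoneOn (fun x => sin x ^ 2) (Icc 0 (π / 2)) := by
  intro a ha b hb hab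
  have hsin_nonneg : 0 ≤ sin a :=
    sin_nonneg_of_nonneg_of_le_pi ha.1 (by linarith [ha.2, pi_pos])
  exact pow_le_pow_left₀ hsin_nonneg
    (sin_le_sin_of_le_of_le_pi_div_two (by linarith [ha.1, pi_pos]) hb.2 hab) 2

lemma sin_sq_fisherRao_speed {x v : ℝ} (hx : 0 < sin x * cos x) :
    2 * sin x * cos x * v / √(sin x ^ 2 * (1 - sin x ^ 2)) = 2 * v := by
  rw [sin_sq_mul_one_sub_sin_sq, sqrt_sq hx.le, div_eq_iff hx.ne']
  ring

lemma sin_sq_fisherRao_energy_density {x v : ℝ} (hx : sin x * cos x ≠ 0) :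
    (2 * sin x * cos x * v) ^ 2 / (sin x ^ 2 * (1 - sin x ^ 2)) = 4 * v ^ 2 := by
  rw [sin_sq_mul_one_sub_sin_sq, div_eq_iff (pow_ne_zero 2 hx)]
  ring

lemma pi_mul_div_two_mem_Ioo {t : ℝ} (ht : t ∈ Ioo 0 1) : π * t / 2 ∈ Ioo 0 (π / 2) :=
  ⟨by nlinarith [ht.1, pi_pos], by nlinarith [ht.2, pi_pos]⟩

lemma pi_mul_div_two_mem_Icc {t : ℝ} (ht : t ∈ Icc 0 1) : π * t / 2 ∈ Icc 0 (π / 2) :=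
  ⟨by nlinarith [ht.1, pi_pos], by nlinarith [ht.2, pi_pos]⟩

lemma hasDerivAt_sin_sq_pi_mul_div_two (t : ℝ) :
    HasDerivAt (fun t => sin (π * t / 2) ^ 2)
      (2 * sin (π * t / 2) * cos (π * t / 2) * (π / 2)) t :=
  (((hasDerivAt_id t).const_mul π).div_const 2).sin_sq.congr_deriv (by simp)

/-- Closed-form kinetic-optimal scheduler for the mask mixture path:
`κ*(t) = sin²(π t / 2)` satisfies the endpoint conditions, is monotone and
differentiable, has constant normalized Fisher–Rao speed `π` on `(0,1)`, and its
Fisher–Rao energy equals `π²`. -/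
theorem mask_mixture_sine_squared_scheduler :
    Real.sin (Real.pi * 0 / 2) ^ 2 = 0
    ∧ Real.sin (Real.pi * 1 / 2) ^ 2 = 1
    ∧ MonotoneOn (fun t : ℝ => Real.sin (Real.pi * t / 2) ^ 2) (Set.Icc 0 1)
    ∧ Differentiable ℝ (fun t : ℝ => Real.sin (Real.pi * t / 2) ^ 2)
    ∧ (∀ t ∈ Set.Ioo (0 : ℝ) 1,
        deriv (fun t : ℝ => Real.sin (Real.pi * t / 2) ^ 2) t
          / Real.sqrt (Real.sin (Real.pi * t / 2) ^ 2
              * (1 - Real.sin (Real.pi * t / 2) ^ 2)) = Real.pi)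
    ∧ ∫ t in (0:ℝ)..1,
        (deriv (fun t : ℝ => Real.sin (Real.pi * t / 2) ^ 2) t) ^ 2
          / (Real.sin (Real.pi * t / 2) ^ 2 * (1 - Real.sin (Real.pi * t / 2) ^ 2))
        = Real.pi ^ 2 := by
  have hderiv := fun t => (hasDerivAt_sin_sq_pi_mul_div_two t).deriv
  refine ⟨by simp, by simp, ?_, ?_, ?_, ?_⟩
  · exact monotoneOn_sin_sq.comp (g := fun x => sin x ^ 2)
      (fun a _ b _ hab => by gcongr) (fun _ => pi_mul_div_two_mem_Icc)
  · exact fun t => (hasDerivAt_sin_sq_pi_mul_div_two t).differentiableAt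
  · intro t ht
    rw [hderiv, sin_sq_fisherRao_speed (sin_mul_cos_pos_of_mem_Ioo (pi_mul_div_two_mem_Ioo ht))]
    ring
  · -- At `t = 1` the integrand is the junk value `0 / 0 = 0`, hence the open interval.
    have hdensity : EqOn (fun t => deriv (fun t => sin (π * t / 2) ^ 2) t ^ 2
        / (sin (π * t / 2) ^ 2 * (1 - sin (π * t / 2) ^ 2))) (fun _ => π ^ 2) (Ioo 0 1) := by
      intro t ht
      dsimp only
      rw [hderiv, sin_sq_fisherRao_energy_density
        (sin_mul_cos_pos_of_mem_Ioo (pi_mul_div_two_mem_Ioo ht)).ne']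
      ring
    rw [intervalIntegral.integral_congr_Ioo_of_le zero_le_one hdensity]
    simp
end
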